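/- For permutations σ, ν of size n with σ ≤_P ν in the permutohedron order, the maximal elements of their Baxter classes satisfy σ↑ ≤_P ν↑, and the minimal elements satisfy σ↓ ≤_P ν↓. -/

import Mathlib

open scoped Classical

/-- Baxter adjacency relations on words over the alphabet of natural numbers. -/
def BaxterAdj (w w' : List ℕ) : Prop :=
  (∃ (a b c d : ℕ) (u v : List ℕ), a ≤ b ∧ b < c ∧ c ≤ d ∧
      w = c :: (u ++ a :: d :: (v ++ [b])) ∧ w' = c :: (u ++ d :: a :: (v ++ [b]))) ∨
  (∃ (a b c d : ℕ) (u v : List ℕ), a < b ∧ b ≤ c ∧ c < d ∧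
      w = b :: (u ++ d :: a :: (v ++ [c])) ∧ w' = b :: (u ++ a :: d :: (v ++ [c])))

/-- One rewriting step: an adjacency applied inside a word (congruence context). -/
def BaxterStep (w w' : List ℕ) : Prop :=
  ∃ (p s u v : List ℕ), BaxterAdj u v ∧ w = p ++ u ++ s ∧ w' = p ++ v ++ s

/-- The Baxter congruence: the equivalence generated by the Baxter steps. -/
def BaxterEquiv : List ℕ → List ℕ → Prop := Relation.EqvGen BaxterStep

/-- Sylvester adjacency: a c u b ≡ c a u b when a ≤ b < c. -/
def SylvAdj (w w' : List ℕ) : Prop :=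
  ∃ (a b c : ℕ) (u : List ℕ), a ≤ b ∧ b < c ∧
    w = a :: c :: (u ++ [b]) ∧ w' = c :: a :: (u ++ [b])

def SylvStep (w w' : List ℕ) : Prop :=
  ∃ (p s u v : List ℕ), SylvAdj u v ∧ w = p ++ u ++ s ∧ w' = p ++ v ++ s

def SylvEquiv : List ℕ → List ℕ → Prop := Relation.EqvGen SylvStep

/-- #-sylvester adjacency: b u a c ≡ b u c a when a < b ≤ c. -/
def SylvHAdj (w w' : List ℕ) : Prop :=
  ∃ (a b c : ℕ) (u : List ℕ), a < b ∧ b ≤ c ∧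
    w = b :: (u ++ [a, c]) ∧ w' = b :: (u ++ [c, a])

def SylvHStep (w w' : List ℕ) : Prop :=
  ∃ (p s u v : List ℕ), SylvHAdj u v ∧ w = p ++ u ++ s ∧ w' = p ++ v ++ s

def SylvHEquiv : List ℕ → List ℕ → Prop := Relation.EqvGen SylvHStep

/-- The standardized word of `u`: position `i` receives the rank of the letter `u i`
(ties broken from left to right), ranks starting at `1`. -/
def std (u : List ℕ) : List ℕ :=
  (List.range u.length).map fun i =>
    ((List.range u.length).filter fun j =>
      decide (u.getD j 0 < u.getD i 0 ∨ (u.getD j 0 = u.getD i 0 ∧ j < i))).length + 1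

/-- The maximal letter of a word. -/
def wordMax (u : List ℕ) : ℕ := u.foldr max 0

/-- The Schützenberger transformation: reverse and complement each letter w.r.t. max + 1. -/
def schutz (u : List ℕ) : List ℕ := u.reverse.map fun x => wordMax u + 1 - x

/-- Labeled binary trees. -/
inductive BT where
  | leaf : BT
  | node : BT → ℕ → BT → BT
deriving DecidableEq

/-- Leaf insertion into a left binary search tree. -/
def leafInsL : BT → ℕ → BT
  | .leaf, a => .node .leaf a .leaf
  | .node l b r, a => if a < b then .node (leafInsL l a) b r else .node l b (leafInsL r a)

/-- Leaf insertion into a right binary search tree. -/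
def leafInsR : BT → ℕ → BT
  | .leaf, a => .node .leaf a .leaf
  | .node l b r, a => if a ≤ b then .node (leafInsR l a) b r else .node l b (leafInsR r a)

/-- The lower restricted tree `T_{≤ a}` of a right binary search tree. -/
def splitLE : BT → ℕ → BT
  | .leaf, _ => .leaf
  | .node l b r, a => if b ≤ a then .node l b (splitLE r a) else splitLE l a

/-- The higher restricted tree `T_{> a}` of a right binary search tree. -/
def splitGT : BT → ℕ → BT
  | .leaf, _ => .leaf
  | .node l b r, a => if b ≤ a then splitGT r a else .node (splitGT l a) b r

/-- Root insertion into a right binary search tree. -/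
def rootIns (t : BT) (a : ℕ) : BT := .node (splitLE t a) a (splitGT t a)

/-- The left tree of the P-symbol: leaf insertions from left to right. -/
def insL (u : List ℕ) : BT := u.foldl leafInsL .leaf

/-- The right tree of the P-symbol: root insertions from left to right. -/
def insR (u : List ℕ) : BT := u.foldl rootIns .leaf

/-- The P-symbol of a word. -/
def Psymb (u : List ℕ) : BT × BT := (insL u, insR u)

/-- Unlabeled binary trees. -/
inductive UBT where
  | leaf : UBT
  | node : UBT → UBT → UBT
deriving DecidableEq

/-- The shape of a labeled binary tree. -/
def shape : BT → UBT
  | .leaf => .leaf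
  | .node l _ r => .node (shape l) (shape r)

/-- The shape of the P-symbol of a word. -/
def Pshape (u : List ℕ) : UBT × UBT := (shape (insL u), shape (insR u))

/-- Number of internal nodes. -/
def sizeU : UBT → ℕ
  | .leaf => 0
  | .node l r => sizeU l + sizeU r + 1

/-- Orientations of the leaves, from left to right: `true` means right-oriented
(the leaf is the right child of its parent); the parameter is the orientation
assigned if the tree is reduced to a leaf. -/
def loU : UBT → Bool → List Bool
  | .leaf, b => [b]
  | .node l r, _ => loU l false ++ loU r true

/-- Leaf orientations of a labeled binary tree. -/
def loB : BT → Bool → List Bool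
  | .leaf, b => [b]
  | .node l _ r, _ => loB l false ++ loB r true

/-- The canopy: orientations of the leaves except the first and the last one. -/
def canU (t : UBT) : List Bool := ((loU t false).drop 1).dropLast

/-- A pair of twin binary trees: same number of nodes and complementary canopies. -/
def IsTwin (J : UBT × UBT) : Prop :=
  sizeU J.1 = sizeU J.2 ∧ (canU J.1).length = (canU J.2).length ∧
    ∀ i < (canU J.1).length, (canU J.1).getD i false ≠ (canU J.2).getD i false

/-- `σ` is (the word of) a permutation of `{1, …, n}`. -/
def IsPerm (n : ℕ) (σ : List ℕ) : Prop := σ.Perm (List.range' 1 n)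

/-- Covering-type step of the right permutohedron (weak) order: exchange of two
adjacent letters `a < b`. -/
def PermutoStep (σ ν : List ℕ) : Prop :=
  ∃ (p s : List ℕ) (a b : ℕ), a < b ∧ σ = p ++ a :: b :: s ∧ ν = p ++ b :: a :: s

/-- The right permutohedron (weak) order. -/
def PermutoLe : List ℕ → List ℕ → Prop := Relation.ReflTransGen PermutoStep

/-- Baxter permutations: avoiding the generalized patterns 2-41-3 and 3-14-2. -/
def IsBaxterPerm (σ : List ℕ) : Prop :=
  ∀ i j k, i < j → j + 1 < k → k < σ.length →
    ¬(σ.getD (j+1) 0 < σ.getD i 0 ∧ σ.getD i 0 < σ.getD k 0 ∧ σ.getD k 0 < σ.getD j 0) ∧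
    ¬(σ.getD j 0 < σ.getD k 0 ∧ σ.getD k 0 < σ.getD i 0 ∧ σ.getD i 0 < σ.getD (j+1) 0)

/-
Orient each Baxter relation as a rewriting `a d ↦ d a`; it is then also a cover of the weak
order, and the letters `g`, `h` that license it may sit anywhere before, resp. after, the pair.
Such an up-step commutes locally with any weak-order cover `σ ⋖ ν`: both can be completed to a
common word by up-steps from `ν` and weak-order steps from the other side (when the two
transpositions overlap this is a hexagon, two steps on each side). As weak-order chains
terminate, local commutation becomes global: if `σ ≡_B τ` and `σ ≤_P ν`, then `τ ≤_P μ` for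
some `μ ≡_B ν`. Taking `τ = σ↑` gives `σ↑ ≤_P μ ≤_P ν↑`; the same argument for the reversed
relations gives `σ↓ ≤_P ν↓`.
-/

open Relation

namespace Relation

variable {α : Type*} {r u : α → α → Prop}

-- Well-founded induction along `r`: every `u`-step is an `r`-step, so both recursive calls are
-- made at `r`-successors of `a`.
theorem ReflTransGen.commute_of_local (hwf : WellFounded (flip r)) (hur : ∀ a b, u a b → r a b)
    (hloc : ∀ a b c, u a b → r a c → ∃ d, ReflTransGen u c d ∧ ReflTransGen r b d)
    {a b c : α} (hab : ReflTransGen u a b) (hac : ReflTransGen r a c) :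
    ∃ d, ReflTransGen u c d ∧ ReflTransGen r b d := by
  induction a using hwf.induction generalizing b c with
  | _ a ih =>
    have hsingle : ∀ b c, u a b → ReflTransGen r a c →
        ∃ d, ReflTransGen u c d ∧ ReflTransGen r b d := by
      intro b c hab hac
      rcases hac.cases_head with rfl | ⟨w, haw, hwc⟩
      · exact ⟨b, .single hab, .refl⟩
      · obtain ⟨d₁, hwd₁, hbd₁⟩ := hloc a b w hab haw
        obtain ⟨d, hcd, hd₁d⟩ := ih w haw hwd₁ hwc
        exact ⟨d, hcd, hbd₁.trans hd₁d⟩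
    rcases hab.cases_head with rfl | ⟨z, haz, hzb⟩
    · exact ⟨c, .refl, hac⟩
    · obtain ⟨d₁, hcd₁, hzd₁⟩ := hsingle z c haz hac
      obtain ⟨d, hd₁d, hbd⟩ := ih z (hur a z haz) hzb hzd₁
      exact ⟨d, hcd₁.trans hd₁d, hbd⟩

theorem EqvGen.exists_reflTransGen_of_local (hwf : WellFounded (flip r))
    (hur : ∀ a b, u a b → r a b)
    (hloc : ∀ a b c, u a b → r a c → ∃ d, ReflTransGen u c d ∧ ReflTransGen r b d)
    {a b c : α} (hab : EqvGen u a b) (hac : ReflTransGen r a c) :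
    ∃ d, EqvGen u c d ∧ ReflTransGen r b d := by
  rw [← EqvGen.reflTransGen_symmGen] at hab
  induction hab with
  | refl => exact ⟨c, .refl c, hac⟩
  | tail _ hbb' ih =>
    obtain ⟨d, hcd, hbd⟩ := ih
    rcases hbb' with hbb' | hb'b
    · obtain ⟨d', hdd', hb'd'⟩ := ReflTransGen.commute_of_local hwf hur hloc (.single hbb') hbd
      exact ⟨d', .trans _ _ _ hcd (EqvGen.reflTransGen_le_eqvGen _ _ _ hdd'), hb'd'⟩
    · exact ⟨d, hcd, .head (hur _ _ hb'b) hbd⟩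

theorem eqvGen_swap (r : α → α → Prop) : EqvGen (Function.swap r) = EqvGen r :=
  le_antisymm (EqvGen.eqvGen_le fun _ _ h => .symm _ _ (.rel _ _ h))
    (EqvGen.eqvGen_le fun _ _ h => .symm _ _ (.rel _ _ h))

end Relation

theorem List.cases_of_append_cons_cons_eq {α : Type*} {P S L R : List α} {x y a d : α}
    (h : P ++ x :: y :: S = L ++ a :: d :: R) :
    (∃ M, L = P ++ x :: y :: M ∧ S = M ++ a :: d :: R) ∨
    (L = P ++ [x] ∧ a = y ∧ S = d :: R) ∨
    (L = P ∧ a = x ∧ d = y ∧ R = S) ∨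
    (P = L ++ [a] ∧ d = x ∧ R = y :: S) ∨
    (∃ M, P = L ++ a :: d :: M ∧ R = M ++ x :: y :: S) := by
  rcases List.append_eq_append_iff.1 h with ⟨M, rfl, hM⟩ | ⟨M, rfl, hM⟩ <;>
    rcases M with _ | ⟨z, _ | ⟨w, M⟩⟩ <;>
    simp only [List.nil_append, List.cons_append, List.cons.injEq] at hM <;>
    obtain ⟨rfl, rfl, rfl⟩ := hM
  · exact .inr (.inr (.inl ⟨by simp, rfl, rfl, rfl⟩))
  · exact .inr (.inl ⟨rfl, rfl, rfl⟩)
  · exact .inl ⟨M, by simp, rfl⟩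
  · exact .inr (.inr (.inl ⟨by simp, rfl, rfl, rfl⟩))
  · exact .inr (.inr (.inr (.inl ⟨rfl, rfl, rfl⟩)))
  · exact .inr (.inr (.inr (.inr ⟨M, by simp, rfl⟩)))

def pairCount {α : Type*} (r : α → α → Bool) : List α → ℕ
  | [] => 0
  | a :: t => t.countP (r a) + pairCount r t

theorem pairCount_swap {α : Type*} (r : α → α → Bool) (p s : List α) {x y : α}
    (hxy : r x y) (hyx : ¬ r y x) :
    pairCount r (p ++ x :: y :: s) = pairCount r (p ++ y :: x :: s) + 1 := by
  induction p with
  | nil => simp [pairCount, hxy, hyx]; omega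
  | cons a p ih =>
    simp only [List.cons_append, pairCount,
      ((List.Perm.swap x y s).append_left p).countP_eq, ih]
    omega

theorem PermutoStep.of_eq (p s : List ℕ) {a b : ℕ} (hab : a < b) {σ τ : List ℕ}
    (hσ : σ = p ++ a :: b :: s) (hτ : τ = p ++ b :: a :: s) : PermutoStep σ τ :=
  ⟨p, s, a, b, hab, hσ, hτ⟩

theorem PermutoStep.perm {σ τ : List ℕ} (h : PermutoStep σ τ) : σ.Perm τ := by
  obtain ⟨p, s, a, b, -, rfl, rfl⟩ := h
  exact (List.Perm.swap b a s).append_left p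

theorem wellFounded_permutoStep : WellFounded PermutoStep := by
  refine Subrelation.wf ?_ (InvImage.wf (pairCount fun a b => decide (b < a)) wellFounded_lt)
  rintro _ _ ⟨p, s, a, b, hab, rfl, rfl⟩
  have := pairCount_swap (fun a b => decide (b < a)) p s (decide_eq_true hab)
    (mt of_decide_eq_true hab.not_gt)
  simp only [InvImage]
  omega

theorem wellFounded_flip_permutoStep : WellFounded (flip PermutoStep) := by
  refine Subrelation.wf ?_ (InvImage.wf (pairCount fun a b => decide (a < b)) wellFounded_lt)
  rintro _ _ ⟨p, s, a, b, hab, rfl, rfl⟩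
  have := pairCount_swap (fun a b => decide (a < b)) p s (decide_eq_true hab)
    (mt of_decide_eq_true hab.not_gt)
  simp only [InvImage]
  omega

/-- The two defining relations of `≡_B`, oriented so that the adjacent letters `a d` become the
inversion `d a`: `g` and `h` are the letters `c` and `b` of the first relation, or `b` and `c` of
the second. -/
def BaxterWitness (g h a d : ℕ) : Prop :=
  (a ≤ h ∧ h < g ∧ g ≤ d) ∨ (a < g ∧ g ≤ h ∧ h < d)

def BaxterUpStep (σ τ : List ℕ) : Prop :=
  ∃ (p s : List ℕ) (a d : ℕ), (∃ g ∈ p, ∃ h ∈ s, BaxterWitness g h a d) ∧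
    σ = p ++ a :: d :: s ∧ τ = p ++ d :: a :: s

namespace BaxterWitness

variable {g h a d : ℕ}

theorem lt (hw : BaxterWitness g h a d) : a < d := by
  rcases hw with hw | hw <;> omega

theorem bounds (hw : BaxterWitness g h a d) : a < g ∧ a ≤ h ∧ h < d ∧ g ≤ d := by
  rcases hw with hw | hw <;> omega

theorem of_le_left {a' : ℕ} (hw : BaxterWitness g h a d) (ha : a' ≤ a) :
    BaxterWitness g h a' d := by
  unfold BaxterWitness at *; omega

theorem of_le_right {d' : ℕ} (hw : BaxterWitness g h a d) (hd : d ≤ d') :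
    BaxterWitness g h a d' := by
  unfold BaxterWitness at *; omega

end BaxterWitness

namespace BaxterUpStep

theorem of_eq (p s : List ℕ) {g h a d : ℕ} (hg : g ∈ p) (hh : h ∈ s)
    (hw : BaxterWitness g h a d) {σ τ : List ℕ}
    (hσ : σ = p ++ a :: d :: s) (hτ : τ = p ++ d :: a :: s) : BaxterUpStep σ τ :=
  ⟨p, s, a, d, ⟨g, hg, h, hh, hw⟩, hσ, hτ⟩

theorem permutoStep {σ τ : List ℕ} (hup : BaxterUpStep σ τ) : PermutoStep σ τ := by
  obtain ⟨p, s, a, d, ⟨g, -, h, -, hw⟩, rfl, rfl⟩ := hup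
  exact .of_eq p s hw.lt rfl rfl

-- Disjoint transpositions commute. When they overlap, the letter moved by the cover crosses the
-- pair `a d`, and both sides meet after two steps; the new pair is licensed by the same witnesses
-- thanks to `BaxterWitness.of_le_left` / `of_le_right`.
theorem exists_of_permutoStep {σ τ ν : List ℕ} (hup : BaxterUpStep σ τ)
    (hstep : PermutoStep σ ν) : ∃ μ, ReflTransGen BaxterUpStep ν μ ∧ PermutoLe τ μ := by
  obtain ⟨L, R, a, d, ⟨g, hg, h, hh, hw⟩, rfl, rfl⟩ := hup
  obtain ⟨P, S, x, y, hxy, hP, rfl⟩ := hstep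
  rcases List.cases_of_append_cons_cons_eq hP.symm with
    ⟨M, rfl, rfl⟩ | ⟨rfl, rfl, rfl⟩ | ⟨rfl, rfl, rfl, rfl⟩ | ⟨rfl, rfl, rfl⟩ | ⟨M, rfl, rfl⟩
  · refine ⟨P ++ y :: x :: M ++ d :: a :: R,
      .single (.of_eq (P ++ y :: x :: M) R (g := g) ?_ hh hw (by simp) rfl),
      .single (.of_eq P (M ++ d :: a :: R) hxy (by simp) (by simp))⟩
    simp only [List.mem_append, List.mem_cons] at hg ⊢; tauto
  · have hgP : g ∈ P := by
      have := hw.bounds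
      simp only [List.mem_append, List.mem_singleton] at hg; rcases hg with hg | rfl <;> omega
    refine ⟨P ++ d :: a :: x :: R,
      .head (.of_eq (P ++ [a]) R (by simp [hgP]) hh (hw.of_le_left hxy.le) (by simp) rfl)
        (.single (.of_eq P (x :: R) hgP (by simp [hh]) hw (by simp) rfl)),
      .head (.of_eq P (a :: R) (hxy.trans hw.lt) (by simp) rfl)
        (.single (.of_eq (P ++ [d]) R hxy (by simp) (by simp)))⟩
  · exact ⟨_, .refl, .refl⟩
  · have hhS : h ∈ S := by
      have := hw.bounds
      simp only [List.mem_cons] at hh; rcases hh with rfl | hh <;> omega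
    refine ⟨L ++ y :: d :: a :: S,
      .head (.of_eq L (d :: S) hg (by simp [hhS]) (hw.of_le_right hxy.le) (by simp) rfl)
        (.single (.of_eq (L ++ [y]) S (by simp [hg]) hhS hw (by simp) (by simp))),
      .head (.of_eq (L ++ [d]) S (hw.lt.trans hxy) (by simp) rfl)
        (.single (.of_eq L (a :: S) hxy (by simp) (by simp)))⟩
  · refine ⟨L ++ d :: a :: (M ++ y :: x :: S),
      .single (.of_eq L (M ++ y :: x :: S) hg (h := h) ?_ hw (by simp) rfl),
      .single (.of_eq (L ++ d :: a :: M) S hxy (by simp) (by simp))⟩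
    simp only [List.mem_append, List.mem_cons] at hh ⊢; tauto

theorem exists_of_permutoStep_target {σ τ ω : List ℕ} (hup : BaxterUpStep σ τ)
    (hstep : PermutoStep ω τ) : ∃ ρ, ReflTransGen BaxterUpStep ρ ω ∧ PermutoLe ρ σ := by
  obtain ⟨L, R, a, d, ⟨g, hg, h, hh, hw⟩, rfl, rfl⟩ := hup
  obtain ⟨P, S, x, y, hxy, rfl, hP⟩ := hstep
  rcases List.cases_of_append_cons_cons_eq hP.symm with
    ⟨M, rfl, rfl⟩ | ⟨rfl, rfl, rfl⟩ | ⟨rfl, rfl, rfl, rfl⟩ | ⟨rfl, rfl, rfl⟩ | ⟨M, rfl, rfl⟩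
  · refine ⟨P ++ x :: y :: M ++ a :: d :: R,
      .single (.of_eq (P ++ x :: y :: M) R (g := g) ?_ hh hw rfl (by simp)),
      .single (.of_eq P (M ++ a :: d :: R) hxy (by simp) (by simp))⟩
    simp only [List.mem_append, List.mem_cons] at hg ⊢; tauto
  · have hgP : g ∈ P := by
      have := hw.bounds
      simp only [List.mem_append, List.mem_singleton] at hg; rcases hg with hg | rfl <;> omega
    refine ⟨P ++ a :: d :: y :: R,
      .head (.of_eq P (y :: R) hgP (by simp [hh]) hw rfl rfl)
        (.single (.of_eq (P ++ [d]) R (by simp [hgP]) hh (hw.of_le_right hxy.le)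
          (by simp) (by simp))),
      .head (.of_eq (P ++ [a]) R hxy (by simp) rfl)
        (.single (.of_eq P (d :: R) (hw.lt.trans hxy) (by simp) (by simp)))⟩
  · exact ⟨_, .refl, .refl⟩
  · have hhS : h ∈ S := by
      have := hw.bounds
      simp only [List.mem_cons] at hh; rcases hh with rfl | hh <;> omega
    refine ⟨L ++ x :: a :: d :: S,
      .head (.of_eq (L ++ [x]) S (by simp [hg]) hhS hw (by simp) rfl)
        (.single (.of_eq L (a :: S) hg (by simp [hhS]) (hw.of_le_left hxy.le)
          (by simp) (by simp))),
      .head (.of_eq L (d :: S) hxy (by simp) rfl)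
        (.single (.of_eq (L ++ [a]) S (hxy.trans hw.lt) (by simp) (by simp)))⟩
  · refine ⟨L ++ a :: d :: (M ++ x :: y :: S),
      .single (.of_eq L (M ++ x :: y :: S) hg (h := h) ?_ hw rfl (by simp)),
      .single (.of_eq (L ++ a :: d :: M) S hxy (by simp) (by simp))⟩
    simp only [List.mem_append, List.mem_cons] at hh ⊢; tauto

end BaxterUpStep

theorem BaxterStep.symmGen_baxterUpStep {σ τ : List ℕ} (h : BaxterStep σ τ) :
    SymmGen BaxterUpStep σ τ := by
  obtain ⟨p, s, _, _, ⟨a, b, c, d, u, v, hab, hbc, hcd, rfl, rfl⟩ |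
    ⟨a, b, c, d, u, v, hab, hbc, hcd, rfl, rfl⟩, rfl, rfl⟩ := h
  · exact .inl (.of_eq (p ++ c :: u) (v ++ b :: s) (g := c) (h := b) (by simp) (by simp)
      (.inl ⟨hab, hbc, hcd⟩) (by simp) (by simp))
  · exact .inr (.of_eq (p ++ b :: u) (v ++ c :: s) (g := b) (h := c) (by simp) (by simp)
      (.inr ⟨hab, hbc, hcd⟩) (by simp) (by simp))

theorem BaxterUpStep.symmGen_baxterStep {σ τ : List ℕ} (h : BaxterUpStep σ τ) :
    SymmGen BaxterStep σ τ := by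
  obtain ⟨p, s, a, d, ⟨g, hg, h, hh, hw⟩, rfl, rfl⟩ := h
  obtain ⟨p₁, p₂, rfl⟩ := List.append_of_mem hg
  obtain ⟨s₁, s₂, rfl⟩ := List.append_of_mem hh
  rcases hw with hw | hw
  · exact .inl ⟨p₁, s₂, _, _, .inl ⟨a, h, g, d, p₂, s₁, hw.1, hw.2.1, hw.2.2, rfl, rfl⟩,
      by simp, by simp⟩
  · exact .inr ⟨p₁, s₂, _, _, .inr ⟨a, g, h, d, p₂, s₁, hw.1, hw.2.1, hw.2.2, rfl, rfl⟩,
      by simp, by simp⟩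

theorem baxterEquiv_eq_eqvGen_baxterUpStep : BaxterEquiv = EqvGen BaxterUpStep := by
  unfold BaxterEquiv
  exact le_antisymm
    (EqvGen.eqvGen_le fun _ _ h => EqvGen.symmGen_le_eqvGen _ _ _ h.symmGen_baxterUpStep)
    (EqvGen.eqvGen_le fun _ _ h => EqvGen.symmGen_le_eqvGen _ _ _ h.symmGen_baxterStep)

namespace BaxterEquiv

variable {σ τ : List ℕ}

theorem perm (h : BaxterEquiv σ τ) : σ.Perm τ := by
  rw [baxterEquiv_eq_eqvGen_baxterUpStep] at h
  exact (List.Perm.eqv _).eqvGen_iff.1 (EqvGen.mono (fun _ _ h => h.permutoStep.perm) _ _ h)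

theorem exists_equiv_ge_of_le {ν : List ℕ} (h : BaxterEquiv σ τ) (hle : PermutoLe σ ν) :
    ∃ μ, BaxterEquiv ν μ ∧ PermutoLe τ μ := by
  rw [baxterEquiv_eq_eqvGen_baxterUpStep] at h ⊢
  exact EqvGen.exists_reflTransGen_of_local wellFounded_flip_permutoStep
    (fun _ _ => BaxterUpStep.permutoStep) (fun _ _ _ => BaxterUpStep.exists_of_permutoStep) h hle

-- The same argument for the reversed relations.
theorem exists_equiv_le_of_ge {ω : List ℕ} (h : BaxterEquiv σ τ) (hle : PermutoLe ω σ) :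
    ∃ ρ, BaxterEquiv ω ρ ∧ PermutoLe ρ τ := by
  rw [baxterEquiv_eq_eqvGen_baxterUpStep, ← eqvGen_swap] at h ⊢
  refine EqvGen.exists_reflTransGen_of_local (r := Function.swap PermutoStep)
    wellFounded_permutoStep (fun _ _ => BaxterUpStep.permutoStep) ?_ h
    (reflTransGen_swap.2 hle) |>.imp fun _ ⟨hω, hτ⟩ => ⟨hω, reflTransGen_swap.1 hτ⟩
  intro _ _ _ hup hstep
  obtain ⟨ρ, hρ, hle⟩ := hup.exists_of_permutoStep_target hstep
  exact ⟨ρ, reflTransGen_swap.2 hρ, reflTransGen_swap.2 hle⟩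

end BaxterEquiv

theorem baxter_minmax_monotone_general (n : ℕ) (σ ν σu νu σd νd : List ℕ)
    (hσ : IsPerm n σ) (hν : IsPerm n ν)
    (hle : PermutoLe σ ν)
    (hσu1 : BaxterEquiv σ σu)
    (hνu2 : ∀ τ, IsPerm n τ → BaxterEquiv ν τ → PermutoLe τ νu)
    (hσd2 : ∀ τ, IsPerm n τ → BaxterEquiv σ τ → PermutoLe σd τ)
    (hνd1 : BaxterEquiv ν νd) :
    PermutoLe σu νu ∧ PermutoLe σd νd := by
  obtain ⟨μ, hνμ, hσuμ⟩ := hσu1.exists_equiv_ge_of_le hle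
  obtain ⟨ρ, hσρ, hρνd⟩ := hνd1.exists_equiv_le_of_ge hle
  exact ⟨ReflTransGen.trans hσuμ (hνu2 μ (hνμ.perm.symm.trans hν) hνμ),
    ReflTransGen.trans (hσd2 ρ (hσρ.perm.symm.trans hσ) hσρ) hρνd⟩

/-- the maps `σ ↦ σ↑` and `σ ↦ σ↓` (maximal and minimal elements
of the Baxter classes) are order-preserving for the permutohedron order. -/
theorem baxter_minmax_monotone (n : ℕ) (σ ν σu νu σd νd : List ℕ)
    (hσ : IsPerm n σ) (hν : IsPerm n ν)
    (hσu : IsPerm n σu) (hνu : IsPerm n νu) (hσd : IsPerm n σd) (hνd : IsPerm n νd)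
    (hle : PermutoLe σ ν)
    (hσu1 : BaxterEquiv σ σu)
    (hσu2 : ∀ τ, IsPerm n τ → BaxterEquiv σ τ → PermutoLe τ σu)
    (hνu1 : BaxterEquiv ν νu)
    (hνu2 : ∀ τ, IsPerm n τ → BaxterEquiv ν τ → PermutoLe τ νu)
    (hσd1 : BaxterEquiv σ σd)
    (hσd2 : ∀ τ, IsPerm n τ → BaxterEquiv σ τ → PermutoLe σd τ)
    (hνd1 : BaxterEquiv ν νd)
    (hνd2 : ∀ τ, IsPerm n τ → BaxterEquiv ν τ → PermutoLe νd τ) :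
    PermutoLe σu νu ∧ PermutoLe σd νd :=
  baxter_minmax_monotone_general n σ ν σu νu σd νd hσ hν hle hσu1 hνu2 hσd2 hνd1
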